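/- arXiv:2312.05242 — 2 statements merged into one kernel-verified Lean document; each statement's English description precedes it below -/
import Mathlib

section
/- Let S and T be simple, locally finite hypergraphs and g : Γ_S(s) → Γ_T(t) an isomorphism of connected components with g(s) = t, and let f be the induced vertex bijection (defined by {f(v)} = g(x_s(v)) ⊕ g(y_s(v))). Then for every r in Γ_S(s), g(r) = f[r] ⊕ c, where c = f[s] ⊕ t and f[r] denotes the image of r under f. -/
open scoped symmDiff

variable {V : Type*}

def Indep (E : Set (Finset V)) (s : Set V) : Prop := ∀ e ∈ E, ¬ ((e : Set V) ⊆ s)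

def SimpleHG (E : Set (Finset V)) : Prop :=
  (∀ e ∈ E, 1 < e.card) ∧ ∀ e ∈ E, ∀ e' ∈ E, e ⊆ e' → e = e'

def LocFin (E : Set (Finset V)) : Prop := ∀ v : V, {e ∈ E | v ∈ e}.Finite

def Nbr (E : Set (Finset V)) (v w : V) : Prop := ∃ e ∈ E, v ∈ e ∧ w ∈ e

def Gamma (E : Set (Finset V)) : SimpleGraph {s : Set V // Indep E s} where
  Adj s t := ∃ v, s.1 ∆ t.1 = {v}
  symm := ⟨fun s t ⟨v, h⟩ => ⟨v, by rwa [symmDiff_comm]⟩⟩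
  loopless := ⟨fun s ⟨v, h⟩ => by
    rw [symmDiff_self] at h
    exact absurd h.symm (Set.singleton_ne_empty v)⟩

def Comp (E : Set (Finset V)) (s : Set V) : Set {t : Set V // Indep E t} :=
  {t | (s ∆ t.1).Finite}

def GammaComp (E : Set (Finset V)) (s : Set V) : SimpleGraph (Comp E s) :=
  (Gamma E).induce (Comp E s)

def xset (E : Set (Finset V)) (s : Set V) (v : V) : Set V :=
  s \ insert v {w | Nbr E v w}

def yset (E : Set (Finset V)) (s : Set V) (v : V) : Set V :=
  insert v (xset E s v)

def IsIsoHG {V W : Type*} (ES : Set (Finset V)) (ET : Set (Finset W)) (f : V → W) : Prop :=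
  Function.Bijective f ∧ ∀ e : Finset V, e ∈ ES ↔ ∃ e' ∈ ET, (e' : Set W) = f '' (e : Set V)

/-!
Label an edge `r — r ∪ {v}` of `Γ_S(s)` by `v`. The two opposite edges of a square of `Γ_S(s)`
have the same label, and so do their images under `g`, since the images span a square of `Γ_T(t)`.
Sliding an edge through squares to `x_s(v) — y_s(v)` therefore shows that `g` maps every edge
labelled `v` to one labelled `f v`. Consequently `f` is injective on every `r ∈ Γ_S(s)`, and
`r ↦ g(r) ⊕ f[r]` is invariant along edges, hence constant on `Γ_S(s)`, with value `t ⊕ f[s]`.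
-/

section SymmDiff
variable {α : Type*}

lemma Set.symmDiff_insert_of_notMem {r : Set α} {u : α} (hu : u ∉ r) : r ∆ insert u r = {u} := by
  rw [symmDiff_of_le (Set.subset_insert u r), Set.insert_sdiff_eq_singleton hu]

lemma Set.symmDiff_sdiff_singleton_of_mem {r : Set α} {u : α} (hu : u ∈ r) :
    r ∆ (r \ {u}) = {u} := by
  rw [symmDiff_of_ge Set.sdiff_subset, Set.sdiff_sdiff_cancel_left (Set.singleton_subset_iff.2 hu)]

lemma symmDiff_symmDiff_symmDiff_cancel_left {β : Type*} [GeneralizedBooleanAlgebra β]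
    (a b c : β) : (a ∆ b) ∆ (a ∆ c) = b ∆ c := by
  rw [symmDiff_symmDiff_symmDiff_comm, symmDiff_self, bot_symmDiff]

lemma symmDiff_symmDiff_symmDiff_cancel_middle {β : Type*} [GeneralizedBooleanAlgebra β]
    (a b c : β) : (a ∆ b) ∆ (b ∆ c) = a ∆ c := by
  rw [symmDiff_comm a, symmDiff_symmDiff_symmDiff_cancel_left]

lemma Set.ne_of_symmDiff_eq_pair {A B : Set α} {u v : α} (huv : u ≠ v) (h : A ∆ B = {u} ∆ {v}) :
    A ≠ B := by
  rintro rfl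
  have hu : u ∈ ({u} : Set α) ∆ {v} := by simp [Set.mem_symmDiff, huv]
  rw [← h, symmDiff_self] at hu
  exact hu

/-- Opposite edges of a non-degenerate 4-cycle in the hypercube on `Set α` carry the same label. -/
lemma Set.symmDiff_eq_of_square {A B C D : Set α} {p q m n : α} (hAB : A ∆ B = {p})
    (hCD : C ∆ D = {q}) (hAC : A ∆ C = {m}) (hBD : B ∆ D = {n}) (hBC : B ≠ C) (hAD : A ≠ D) :
    A ∆ B = C ∆ D := by
  have hpm : p ≠ m := by
    rintro rfl
    rw [← hAC, symmDiff_right_inj] at hAB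
    exact hBC hAB
  have hpn : p ≠ n := by
    rintro rfl
    rw [← hBD, symmDiff_comm B, symmDiff_left_inj] at hAB
    exact hAD hAB
  have hsq : ({p} : Set α) ∆ {q} = {m} ∆ {n} := by
    rw [← hAB, ← hCD, ← hAC, ← hBD, symmDiff_symmDiff_symmDiff_comm]
  have hp : p ∉ ({p} : Set α) ∆ {q} := by
    rw [hsq]; simp [Set.mem_symmDiff, hpm, hpn]
  have hpq : p = q := by
    by_contra hpq
    exact hp (by simp [Set.mem_symmDiff, hpq])
  rw [hAB, hCD, hpq]

@[elab_as_elim]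
theorem Set.induction_on_symmDiff_finite {b : Set α} {P : Set α → Prop} (base : P b)
    (remove : ∀ r, ∀ u ∈ r, u ∉ b → P (r \ {u}) → P r)
    (add : ∀ r ⊆ b, ∀ u ∈ b, u ∉ r → P (insert u r) → P r)
    {r : Set α} (hr : (r ∆ b).Finite) : P r := by
  induction h : (r ∆ b).ncard using Nat.strong_induction_on generalizing r with
  | _ n ih =>
  have closer : ∀ r', ∀ u ∈ r ∆ b, r' ∆ b = (r ∆ b) \ {u} → P r' := fun r' u hu hr' =>
    ih _ (h ▸ hr' ▸ Set.ncard_sdiff_singleton_lt_of_mem hu hr) (hr' ▸ hr.sdiff) rfl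
  by_cases hrb : r ⊆ b
  · by_cases hbr : b ⊆ r
    · exact hrb.antisymm hbr ▸ base
    obtain ⟨u, hub, hur⟩ := Set.not_subset.1 hbr
    refine add r hrb u hub hur (closer _ u (Or.inr ⟨hub, hur⟩) ?_)
    ext w; by_cases w = u <;> simp_all [Set.mem_symmDiff]
  · obtain ⟨u, hur, hub⟩ := Set.not_subset.1 hrb
    refine remove r u hur hub (closer _ u (Or.inl ⟨hur, hub⟩) ?_)
    ext w; by_cases w = u <;> simp_all [Set.mem_symmDiff]

end SymmDiff

section Hypergraph
variable {E : Set (Finset V)} {s : Set V}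

lemma Indep.mono {r : Set V} (hs : Indep E s) (hr : r ⊆ s) : Indep E r :=
  fun e he hes => hs e he (hes.trans hr)

lemma LocFin.finite_nbr (hlf : LocFin E) (v : V) : {w | Nbr E v w}.Finite := by
  refine ((hlf v).biUnion fun e _ => e.finite_toSet).subset ?_
  rintro w ⟨e, he, hv, hw⟩
  exact Set.mem_biUnion ⟨he, hv⟩ hw

lemma LocFin.finite_symmDiff_xset (hlf : LocFin E) (s : Set V) (v : V) :
    (s ∆ xset E s v).Finite := by
  refine ((hlf.finite_nbr v).insert v).subset ?_
  rw [xset, symmDiff_of_ge Set.sdiff_subset, Set.sdiff_sdiff_right_self]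
  exact Set.inter_subset_right

lemma xset_subset (E : Set (Finset V)) (s : Set V) (v : V) : xset E s v ⊆ s :=
  Set.sdiff_subset

lemma notMem_xset (E : Set (Finset V)) (s : Set V) (v : V) : v ∉ xset E s v :=
  fun h => h.2 (Set.mem_insert v _)

/-- Every edge through `v` has a second vertex, which is a neighbour of `v` and so lies outside
`x_s(v)`. -/
lemma Indep.yset (hE : SimpleHG E) (hs : Indep E s) (v : V) : Indep E (yset E s v) := by
  intro e he hey
  by_cases hv : v ∈ e
  · obtain ⟨w, hw, hwv⟩ := Finset.exists_mem_ne (hE.1 e he) v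
    rcases hey hw with h | h
    · exact hwv h
    · exact h.2 (Set.mem_insert_of_mem _ ⟨e, he, hv, hw⟩)
  · refine hs e he fun w hw => ?_
    rcases hey hw with rfl | h
    · exact absurd hw hv
    · exact h.1

lemma Comp.exists_of_symmDiff_eq_singleton (a : Comp E s) {r : Set V} (hr : Indep E r) {u : V}
    (h : a.1.1 ∆ r = {u}) : ∃ b : Comp E s, b.1.1 = r :=
  ⟨⟨⟨r, hr⟩, ((a.2 : (s ∆ a.1.1).Finite).union (h ▸ Set.finite_singleton u)).subset
    (symmDiff_triangle s a.1.1 r)⟩, rfl⟩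

lemma Comp.ext {a b : Comp E s} (h : a.1.1 = b.1.1) : a = b :=
  Subtype.ext (Subtype.ext h)

theorem Comp.apply_eq_of_forall_insert (hs : Indep E s) {β : Type*} {φ : Comp E s → β}
    (hφ : ∀ a b : Comp E s, ∀ v ∉ a.1.1, b.1.1 = insert v a.1.1 → φ a = φ b) (a b : Comp E s) :
    φ a = φ b := by
  let a₀ : Comp E s := ⟨⟨s, hs⟩, by simp [Comp]⟩
  suffices ∀ a : Comp E s, φ a = φ a₀ by rw [this a, this b]
  suffices ∀ r, (r ∆ s).Finite → ∀ a : Comp E s, a.1.1 = r → φ a = φ a₀ from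
    fun a => this _ (symmDiff_comm s a.1.1 ▸ a.2) a rfl
  intro r hr
  refine Set.induction_on_symmDiff_finite (fun a ha => congrArg φ (Comp.ext ha)) ?_ ?_ hr
  · intro r u hur _ ih
    rintro a rfl
    obtain ⟨a', ha'⟩ := Comp.exists_of_symmDiff_eq_singleton a (a.1.2.mono Set.sdiff_subset)
      (Set.symmDiff_sdiff_singleton_of_mem hur)
    rw [← ih a' ha']
    exact (hφ a' a u (by simp [ha']) (by simp [ha', hur])).symm
  · intro r hrs u hus hur ih
    rintro a rfl
    obtain ⟨a', ha'⟩ := Comp.exists_of_symmDiff_eq_singleton a (hs.mono (Set.insert_subset hus hrs))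
      (Set.symmDiff_insert_of_notMem hur)
    rw [← ih a' ha']
    exact hφ a a' u hur ha'

end Hypergraph

section Embedding
variable {VS VT : Type*} {ES : Set (Finset VS)} {ET : Set (Finset VT)} {s : Set VS} {t : Set VT}
  (g : GammaComp ES s ↪g GammaComp ET t)

lemma GammaComp.exists_symmDiff_map_eq_singleton {a b : Comp ES s} {v : VS}
    (hab : a.1.1 ∆ b.1.1 = {v}) : ∃ w, (g a).1.1 ∆ (g b).1.1 = {w} :=
  g.map_adj_iff.2 ⟨v, hab⟩

lemma GammaComp.map_ne_of_symmDiff_eq_pair {a b : Comp ES s} {u v : VS} (huv : u ≠ v)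
    (h : a.1.1 ∆ b.1.1 = {u} ∆ {v}) : (g a).1.1 ≠ (g b).1.1 :=
  fun hg => Set.ne_of_symmDiff_eq_pair huv h (congrArg (·.1.1) (g.injective (Comp.ext hg)))

theorem GammaComp.symmDiff_map_eq_of_square {a b c d : Comp ES s} {u v : VS} (huv : u ≠ v)
    (hab : a.1.1 ∆ b.1.1 = {v}) (hcd : c.1.1 ∆ d.1.1 = {v}) (hac : a.1.1 ∆ c.1.1 = {u}) :
    (g a).1.1 ∆ (g b).1.1 = (g c).1.1 ∆ (g d).1.1 := by
  have hbd : b.1.1 ∆ d.1.1 = {u} := by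
    rw [← symmDiff_symmDiff_symmDiff_cancel_middle b.1.1 c.1.1,
      ← symmDiff_symmDiff_symmDiff_cancel_left a.1.1 b.1.1, hab, hac, hcd, symmDiff_symmDiff_self']
  have hbc : b.1.1 ∆ c.1.1 = {v} ∆ {u} := by
    rw [← hab, ← hac, symmDiff_symmDiff_symmDiff_cancel_left]
  have had : a.1.1 ∆ d.1.1 = {u} ∆ {v} := by
    rw [← hac, ← hcd, symmDiff_symmDiff_symmDiff_cancel_middle]
  obtain ⟨p, hp⟩ := exists_symmDiff_map_eq_singleton g hab
  obtain ⟨q, hq⟩ := exists_symmDiff_map_eq_singleton g hcd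
  obtain ⟨m, hm⟩ := exists_symmDiff_map_eq_singleton g hac
  obtain ⟨n, hn⟩ := exists_symmDiff_map_eq_singleton g hbd
  exact Set.symmDiff_eq_of_square hp hq hm hn (map_ne_of_symmDiff_eq_pair g huv.symm hbc)
    (map_ne_of_symmDiff_eq_pair g huv had)

end Embedding

def IsInducedVertexMap {VS VT : Type*} {ES : Set (Finset VS)} {ET : Set (Finset VT)} {s : Set VS}
    {t : Set VT} (g : GammaComp ES s ↪g GammaComp ET t) (f : VS → VT) : Prop :=
  ∀ (v : VS) (hxI : Indep ES (xset ES s v)) (hyI : Indep ES (yset ES s v))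
    (hxC : (⟨xset ES s v, hxI⟩ : {u : Set VS // Indep ES u}) ∈ Comp ES s)
    (hyC : (⟨yset ES s v, hyI⟩ : {u : Set VS // Indep ES u}) ∈ Comp ES s),
    (g ⟨⟨xset ES s v, hxI⟩, hxC⟩).1.1 ∆ (g ⟨⟨yset ES s v, hyI⟩, hyC⟩).1.1 = {f v}

namespace IsInducedVertexMap
variable {VS VT : Type*} {ES : Set (Finset VS)} {ET : Set (Finset VT)} {s : Set VS} {t : Set VT}
  {g : GammaComp ES s ↪g GammaComp ET t} {f : VS → VT}

theorem symmDiff_map_of_insert (hf : IsInducedVertexMap g f) (hE : SimpleHG ES)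
    (hlf : LocFin ES) (hs : Indep ES s) {a b : Comp ES s} {v : VS} (hv : v ∉ a.1.1)
    (hab : b.1.1 = insert v a.1.1) : (g a).1.1 ∆ (g b).1.1 = {f v} := by
  have ha : (a.1.1 ∆ xset ES s v).Finite :=
    ((symmDiff_comm s a.1.1 ▸ a.2 : (a.1.1 ∆ s).Finite).union
      (hlf.finite_symmDiff_xset s v)).subset (symmDiff_triangle _ s _)
  suffices ∀ r, (r ∆ xset ES s v).Finite → v ∉ r → ∀ c d : Comp ES s, c.1.1 = r →
      d.1.1 = insert v r → (g c).1.1 ∆ (g d).1.1 = {f v} from this _ ha hv a b rfl hab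
  intro r hr
  refine Set.induction_on_symmDiff_finite ?_ ?_ ?_ hr
  · rintro - ⟨⟨_, hxI⟩, hxC⟩ ⟨⟨_, hyI⟩, hyC⟩ rfl rfl
    exact hf v hxI hyI hxC hyC
  · rintro r u hur - ih hvr c d rfl hd
    have huv : u ≠ v := fun h => hvr (h ▸ hur)
    have hvr' : v ∉ c.1.1 \ {u} := fun h => hvr h.1
    obtain ⟨c', hc'⟩ := Comp.exists_of_symmDiff_eq_singleton c (c.1.2.mono Set.sdiff_subset)
      (Set.symmDiff_sdiff_singleton_of_mem hur)
    obtain ⟨d', hd'⟩ := Comp.exists_of_symmDiff_eq_singleton c'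
      (d.1.2.mono (hd ▸ Set.insert_subset_insert Set.sdiff_subset))
      (by rw [hc']; exact Set.symmDiff_insert_of_notMem hvr')
    rw [GammaComp.symmDiff_map_eq_of_square g huv (hd ▸ Set.symmDiff_insert_of_notMem hvr)
      (hc' ▸ hd' ▸ Set.symmDiff_insert_of_notMem hvr')
      (hc' ▸ Set.symmDiff_sdiff_singleton_of_mem hur)]
    exact ih hvr' c' d' hc' hd'
  · rintro r hrx u hux hur ih hvr c d rfl hd
    have huv : u ≠ v := fun h => notMem_xset ES s v (h ▸ hux)
    have hvu : v ∉ insert u c.1.1 := by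
      rintro (h | h)
      exacts [huv h.symm, hvr h]
    have hux' : insert u c.1.1 ⊆ xset ES s v := Set.insert_subset hux hrx
    obtain ⟨c', hc'⟩ := Comp.exists_of_symmDiff_eq_singleton c
      (hs.mono (hux'.trans (xset_subset ES s v))) (Set.symmDiff_insert_of_notMem hur)
    obtain ⟨d', hd'⟩ := Comp.exists_of_symmDiff_eq_singleton c'
      ((Indep.yset hE hs v).mono (Set.insert_subset_insert hux'))
      (by rw [hc']; exact Set.symmDiff_insert_of_notMem hvu)
    rw [GammaComp.symmDiff_map_eq_of_square g huv (hd ▸ Set.symmDiff_insert_of_notMem hvr)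
      (hc' ▸ hd' ▸ Set.symmDiff_insert_of_notMem hvu)
      (hc' ▸ Set.symmDiff_insert_of_notMem hur)]
    exact ih hvu c' d' hc' hd'

theorem injOn (hf : IsInducedVertexMap g f) (hE : SimpleHG ES) (hlf : LocFin ES)
    (hs : Indep ES s) (a : Comp ES s) : Set.InjOn f a.1.1 := by
  have removal : ∀ z ∈ a.1.1, ∃ c : Comp ES s,
      c.1.1 = a.1.1 \ {z} ∧ (g c).1.1 ∆ (g a).1.1 = {f z} := by
    intro z hz
    obtain ⟨c, hc⟩ := Comp.exists_of_symmDiff_eq_singleton a (a.1.2.mono Set.sdiff_subset)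
      (Set.symmDiff_sdiff_singleton_of_mem hz)
    exact ⟨c, hc, hf.symmDiff_map_of_insert hE hlf hs (by simp [hc]) (by simp [hc, hz])⟩
  intro u hu w hw hfuw
  obtain ⟨cu, hcu, hgu⟩ := removal u hu
  obtain ⟨cw, hcw, hgw⟩ := removal w hw
  have hc : cu = cw := g.injective (Comp.ext (symmDiff_left_inj.1 (hgu.trans (hfuw ▸ hgw.symm))))
  by_contra huw
  have hu' : u ∈ a.1.1 \ {w} := ⟨hu, huw⟩
  rw [← hcw, ← hc, hcu] at hu'
  exact hu'.2 rfl

theorem symmDiff_image_eq_of_insert (hf : IsInducedVertexMap g f) (hE : SimpleHG ES)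
    (hlf : LocFin ES) (hs : Indep ES s) {a b : Comp ES s} {v : VS} (hv : v ∉ a.1.1)
    (hab : b.1.1 = insert v a.1.1) : (g a).1.1 ∆ (f '' a.1.1) = (g b).1.1 ∆ (f '' b.1.1) := by
  have hfv : f v ∉ f '' a.1.1 := by
    rintro ⟨w, hw, hwv⟩
    have hvb : v ∈ b.1.1 := hab ▸ Set.mem_insert v _
    have hwb : w ∈ b.1.1 := hab ▸ Set.mem_insert_of_mem v hw
    exact hv (hf.injOn hE hlf hs b hwb hvb hwv ▸ hw)
  have himage : (f '' a.1.1) ∆ (f '' b.1.1) = {f v} := by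
    rw [hab, Set.image_insert_eq]
    exact Set.symmDiff_insert_of_notMem hfv
  rw [← symmDiff_eq_bot, symmDiff_symmDiff_symmDiff_comm,
    hf.symmDiff_map_of_insert hE hlf hs hv hab, himage, symmDiff_self]

end IsInducedVertexMap

theorem stmt4_general {VS VT : Type*} (ES : Set (Finset VS)) (ET : Set (Finset VT))
    (hSsimp : SimpleHG ES) (hSlf : LocFin ES)
    (s : Set VS) (t : Set VT) (hs : Indep ES s)
    (g : GammaComp ES s ≃g GammaComp ET t)
    (hsC : (⟨s, hs⟩ : {u : Set VS // Indep ES u}) ∈ Comp ES s)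
    (hgst : (g ⟨⟨s, hs⟩, hsC⟩).1.1 = t)
    (f : VS → VT)
    (hf : ∀ (v : VS) (hxI : Indep ES (xset ES s v)) (hyI : Indep ES (yset ES s v))
      (hxC : (⟨xset ES s v, hxI⟩ : {u : Set VS // Indep ES u}) ∈ Comp ES s)
      (hyC : (⟨yset ES s v, hyI⟩ : {u : Set VS // Indep ES u}) ∈ Comp ES s),
      (g ⟨⟨xset ES s v, hxI⟩, hxC⟩).1.1 ∆ (g ⟨⟨yset ES s v, hyI⟩, hyC⟩).1.1 = {f v}) :
    ∀ r : Comp ES s, (g r).1.1 = (f '' r.1.1) ∆ ((f '' s) ∆ t) := by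
  have hfg : IsInducedVertexMap g.toEmbedding f := hf
  intro r
  have hr : (g r).1.1 ∆ (f '' r.1.1) = (g ⟨⟨s, hs⟩, hsC⟩).1.1 ∆ (f '' s) :=
    Comp.apply_eq_of_forall_insert hs (φ := fun a => (g a).1.1 ∆ (f '' a.1.1))
      (fun a b v hv hab => hfg.symmDiff_image_eq_of_insert hSsimp hSlf hs hv hab) r ⟨⟨s, hs⟩, hsC⟩
  rw [hgst] at hr
  rw [← symmDiff_symmDiff_cancel_right (f '' r.1.1) (g r).1.1, hr, symmDiff_comm t,
    symmDiff_comm]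

theorem stmt4 {VS VT : Type*} (ES : Set (Finset VS)) (ET : Set (Finset VT))
    (hSsimp : SimpleHG ES) (hTsimp : SimpleHG ET) (hSlf : LocFin ES) (hTlf : LocFin ET)
    (s : Set VS) (t : Set VT) (hs : Indep ES s) (ht : Indep ET t)
    (g : GammaComp ES s ≃g GammaComp ET t)
    (hsC : (⟨s, hs⟩ : {u : Set VS // Indep ES u}) ∈ Comp ES s)
    (hgst : (g ⟨⟨s, hs⟩, hsC⟩).1.1 = t)
    (f : VS → VT)
    (hf : ∀ (v : VS) (hxI : Indep ES (xset ES s v)) (hyI : Indep ES (yset ES s v))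
      (hxC : (⟨xset ES s v, hxI⟩ : {u : Set VS // Indep ES u}) ∈ Comp ES s)
      (hyC : (⟨yset ES s v, hyI⟩ : {u : Set VS // Indep ES u}) ∈ Comp ES s),
      (g ⟨⟨xset ES s v, hxI⟩, hxC⟩).1.1 ∆ (g ⟨⟨yset ES s v, hyI⟩, hyC⟩).1.1 = {f v}) :
    ∀ r : Comp ES s, (g r).1.1 = (f '' r.1.1) ∆ ((f '' s) ∆ t) :=
  stmt4_general ES ET hSsimp hSlf s t hs g hsC hgst f hf
end

section
/- Let S and T be simple, locally finite hypergraphs with no isolated vertices, and let g be an isomorphism from a connected component Γ_S(s) of Γ_S to a connected component Γ_T(t) of Γ_T. Then there exists a hypergraph isomorphism f : S → T such that g(r) = f[r] for every vertex r of Γ_S(s). -/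
open scoped symmDiff

variable {V : Type*}

/-!
An isomorphism `g` of components sends every flip (an edge of `Γ_S` whose endpoints differ in a
single vertex `v`) to a flip. In a square of flips opposite edges flip the same vertex, and any
two flips of `v` are joined by a ladder of such squares, so the vertex flipped by the image
depends on `v` alone; this defines `f`, a bijection whose inverse comes from `g⁻¹`.
Walking from `r` to `r'` one vertex at a time gives `g r ∆ g r' = f[r ∆ r']`, hence
`g r = f[r] ∆ C` for a fixed set `C`. For an edge `e`, let `z` be `s` minus every vertex adjacent
to `e`: each `z ∪ (e - u)` is independent but `z ∪ e` is not. Transported through `g`, this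
produces an edge of `T` containing `f[e]` and disjoint from `g z`. So `C` misses `f[e]`, whence
`C = ∅`, and, running the same argument for `g⁻¹`, `f[e]` is itself an edge.
-/

lemma Set.singleton_symmDiff_of_notMem {α : Type*} {a : Set α} {x : α} (hx : x ∉ a) :
    {x} ∆ a = insert x a := by
  ext y
  by_cases hy : y = x
  · subst hy; simp [Set.mem_symmDiff, hx]
  · simp [Set.mem_symmDiff, hy]

lemma Set.symmDiff_insert_self {α : Type*} {a : Set α} {x : α} (hx : x ∉ a) :
    a ∆ insert x a = {x} := by
  rw [← Set.singleton_symmDiff_of_notMem hx, symmDiff_left_comm, symmDiff_self, symmDiff_bot]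

lemma Set.eq_insert_of_symmDiff_eq_singleton {α : Type*} {a b : Set α} {x : α}
    (h : a ∆ b = {x}) (hx : x ∉ a) : b = insert x a := by
  rw [← symmDiff_symmDiff_cancel_left a b, h, symmDiff_comm, Set.singleton_symmDiff_of_notMem hx]

lemma Set.eq_of_symmDiff_square {α : Type*} {A B C D : Set α} {p q x y : α}
    (hAB : A ∆ B = {p}) (hCD : C ∆ D = {q}) (hAC : A ∆ C = {x}) (hBD : B ∆ D = {y})
    (hBC : B ≠ C) (hAD : A ≠ D) : p = q := by
  have hpy : A ∆ D = {p} ∆ {y} := by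
    rw [← hAB, ← hBD, symmDiff_assoc, symmDiff_symmDiff_cancel_left]
  have hxq : A ∆ D = {x} ∆ {q} := by
    rw [← hAC, ← hCD, symmDiff_assoc, symmDiff_symmDiff_cancel_left]
  have hpx : B ∆ C = {p} ∆ {x} := by
    rw [← hAB, ← hAC, symmDiff_comm A B, symmDiff_assoc, symmDiff_symmDiff_cancel_left]
  have hpy' : p ≠ y := fun h => hAD (symmDiff_eq_bot.1 (by rw [hpy, h, symmDiff_self]))
  have hpx' : p ≠ x := fun h => hBC (symmDiff_eq_bot.1 (by rw [hpx, h, symmDiff_self]))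
  have hp : p ∈ ({x} : Set α) ∆ {q} := by
    rw [← hxq, hpy]
    simp [Set.mem_symmDiff, hpy']
  simpa [Set.mem_symmDiff, hpx'] using hp

lemma Indep.mono_s8 {E : Set (Finset V)} {a b : Set V} (hb : Indep E b) (hab : a ⊆ b) :
    Indep E a :=
  fun e he hea => hb e he (hea.trans hab)

lemma setOf_nbr_finite {E : Set (Finset V)} (hlf : LocFin E) (v : V) :
    {w | Nbr E v w}.Finite :=
  ((hlf v).biUnion fun e _ => e.finite_toSet).subset
    fun _ ⟨_, he, hv, hw⟩ => Set.mem_biUnion ⟨he, hv⟩ hw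

lemma indep_yset {E : Set (Finset V)} {s : Set V} (hsimp : SimpleHG E) (hs : Indep E s) (v : V) :
    Indep E (yset E s v) := by
  intro e he hey
  by_cases hve : v ∈ e
  · obtain ⟨u, hu, huv⟩ := Finset.exists_mem_ne (hsimp.1 e he) v
    rcases hey hu with rfl | hux
    · exact huv rfl
    · exact hux.2 (Set.mem_insert_of_mem _ ⟨e, he, hve, hu⟩)
  · refine hs e he fun x hx => ?_
    rcases hey hx with rfl | hxs
    · exact absurd hx hve
    · exact hxs.1

lemma exists_edge_subset_of_not_indep {E : Set (Finset V)} {D A : Set V}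
    (hA : ∀ w ∈ A, Indep E (D ∆ (A \ {w}))) (hDA : ¬ Indep E (D ∆ A)) :
    ∃ e ∈ E, A ⊆ e ∧ (e : Set V) ⊆ D ∆ A := by
  simp only [Indep, not_forall, not_not] at hDA
  obtain ⟨e, he, heDA⟩ := hDA
  refine ⟨e, he, fun w hw => by_contra fun hwe => hA w hw e he fun y hy => ?_, heDA⟩
  have hyw : y ≠ w := ne_of_mem_of_not_mem hy hwe
  have hy' := heDA hy
  simp only [Set.mem_symmDiff, Set.mem_sdiff, Set.mem_singleton_iff] at hy' ⊢
  tauto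

namespace Comp

variable {E : Set (Finset V)} {s : Set V}

lemma ext_set {a b : Comp E s} (h : a.1.1 = b.1.1) : a = b :=
  Subtype.ext (Subtype.ext h)

lemma symmDiff_finite (a b : Comp E s) : (a.1.1 ∆ b.1.1).Finite := by
  refine ((symmDiff_comm s a.1.1 ▸ a.2 : (a.1.1 ∆ s).Finite).union b.2).subset ?_
  exact symmDiff_triangle a.1.1 s b.1.1

def base (hs : Indep E s) : Comp E s := ⟨⟨s, hs⟩, by simp [Comp]⟩

@[simp] lemma base_val (hs : Indep E s) : (base hs).1.1 = s := rfl

def ofSymmDiffFinite (a : Comp E s) (x : Set V) (hx : Indep E x) (hfin : (a.1.1 ∆ x).Finite) :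
    Comp E s :=
  ⟨⟨x, hx⟩, (a.2.union hfin).subset (symmDiff_triangle s a.1.1 x)⟩

def addVertex (a : Comp E s) (x : V) (hx : Indep E (insert x a.1.1)) : Comp E s :=
  ofSymmDiffFinite a _ hx <| (Set.finite_singleton x).subset fun y hy => by
    simp only [Set.mem_symmDiff, Set.mem_insert_iff] at hy
    tauto

def sdiff (a : Comp E s) (N : Set V) (hN : N.Finite) : Comp E s :=
  ofSymmDiffFinite a (a.1.1 \ N) (a.1.2.mono_s8 Set.sdiff_subset) <| by
    rw [symmDiff_of_ge Set.sdiff_subset, Set.sdiff_sdiff_right_self]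
    exact hN.subset Set.inter_subset_right

def inter (a b : Comp E s) : Comp E s :=
  ofSymmDiffFinite a (a.1.1 ∩ b.1.1) (a.1.2.mono_s8 Set.inter_subset_left) <|
    (symmDiff_finite a b).subset fun y hy => by
      simp only [Set.mem_symmDiff, Set.mem_inter_iff] at hy ⊢
      tauto

lemma exists_flip (hsimp : SimpleHG E) (hlf : LocFin E) (hs : Indep E s) (v : V) :
    ∃ a b : Comp E s, v ∉ a.1.1 ∧ a.1.1 ∆ b.1.1 = {v} := by
  let x := sdiff (base hs) _ ((setOf_nbr_finite hlf v).insert v)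
  have hvx : v ∉ x.1.1 := fun h => h.2 (Set.mem_insert v _)
  exact ⟨x, addVertex x v (indep_yset hsimp hs v), hvx, Set.symmDiff_insert_self hvx⟩

theorem induction_subset {P : Comp E s → Prop} {a : Comp E s} (top : P a)
    (step : ∀ (c c' : Comp E s) (x : V), x ∉ c.1.1 → c'.1.1 = insert x c.1.1 →
      c'.1.1 ⊆ a.1.1 → P c' → P c)
    {c : Comp E s} (hc : c.1.1 ⊆ a.1.1) : P c := by
  suffices key :
      ∀ D : Set V, D.Finite → ∀ c : Comp E s, c.1.1 ⊆ a.1.1 → a.1.1 \ c.1.1 = D → P c from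
    key _ ((symmDiff_finite c a).subset fun _ hy => Or.inr hy) c hc rfl
  intro D hD
  induction D, hD using Set.Finite.induction_on with
  | empty =>
    intro c hc hac
    rwa [ext_set (subset_antisymm hc (Set.sdiff_eq_empty.1 hac))]
  | @insert x D hxD _ ih =>
    intro c hc hac
    have hx : x ∈ a.1.1 \ c.1.1 := hac ▸ Set.mem_insert x D
    have hxc : insert x c.1.1 ⊆ a.1.1 := Set.insert_subset hx.1 hc
    refine step c (addVertex c x (a.1.2.mono_s8 hxc)) x hx.2 rfl hxc (ih _ hxc ?_)
    show a.1.1 \ insert x c.1.1 = D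
    rw [Set.insert_eq, Set.union_comm, ← Set.sdiff_sdiff, hac, Set.insert_sdiff_self_of_notMem hxD]

lemma exists_disjoint_of_edge (hsimp : SimpleHG E) (hlf : LocFin E) (hs : Indep E s)
    {e : Finset V} (he : e ∈ E) :
    ∃ z : Comp E s, Disjoint (e : Set V) z.1.1 ∧ ∀ u ∈ e, Indep E (z.1.1 ∪ (↑e \ {u})) := by
  set N := {w | ∃ u ∈ e, Nbr E u w}
  have hN : N.Finite := (e.finite_toSet.biUnion fun u _ => setOf_nbr_finite hlf u).subset
    fun w ⟨u, hu, huw⟩ => Set.mem_biUnion hu huw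
  let z := sdiff (base hs) N hN
  have hNz : ∀ w ∈ N, w ∉ z.1.1 := fun w hw hwz => hwz.2 hw
  refine ⟨z, Set.disjoint_left.2 fun u hu => hNz u ⟨u, hu, e, he, hu, hu⟩,
    fun u hu e' he' hsub => ?_⟩
  by_cases hmeet : ∃ x ∈ e', x ∈ e
  · obtain ⟨x, hxe', hxe⟩ := hmeet
    have he'e : (e' : Set V) ⊆ e \ {u} := fun y hy =>
      (hsub hy).resolve_left (hNz y ⟨x, hxe, e', he', hxe', hy⟩)
    obtain rfl := hsimp.2 e' he' e he (Finset.coe_subset.1 (he'e.trans Set.sdiff_subset))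
    exact (he'e hu).2 rfl
  · push Not at hmeet
    exact hs e' he' fun y hy => ((hsub hy).resolve_right fun h => hmeet y hy h.1).1

end Comp

section Transport

variable {W : Type*} {ES : Set (Finset V)} {ET : Set (Finset W)} {s : Set V} {t : Set W}

lemma exists_apply_symmDiff_eq_singleton (g : GammaComp ES s ≃g GammaComp ET t)
    {a b : Comp ES s} {v : V} (h : a.1.1 ∆ b.1.1 = {v}) :
    ∃ w, (g a).1.1 ∆ (g b).1.1 = {w} :=
  g.map_rel_iff.2 ⟨v, h⟩

lemma apply_symmDiff_eq_of_square (g : GammaComp ES s ≃g GammaComp ET t)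
    {a b c d : Comp ES s} {u v : V} (huv : u ≠ v)
    (hab : a.1.1 ∆ b.1.1 = {v}) (hcd : c.1.1 ∆ d.1.1 = {v})
    (hac : a.1.1 ∆ c.1.1 = {u}) (hbd : b.1.1 ∆ d.1.1 = {u}) :
    (g a).1.1 ∆ (g b).1.1 = (g c).1.1 ∆ (g d).1.1 := by
  obtain ⟨p, hp⟩ := exists_apply_symmDiff_eq_singleton g hab
  obtain ⟨q, hq⟩ := exists_apply_symmDiff_eq_singleton g hcd
  obtain ⟨x, hx⟩ := exists_apply_symmDiff_eq_singleton g hac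
  obtain ⟨y, hy⟩ := exists_apply_symmDiff_eq_singleton g hbd
  have hbc : (g b).1.1 ≠ (g c).1.1 := fun h => by
    rw [g.injective (Comp.ext_set h), hac, Set.singleton_eq_singleton_iff] at hab
    exact huv hab
  have had : (g a).1.1 ≠ (g d).1.1 := fun h => by
    rw [← g.injective (Comp.ext_set h), symmDiff_comm, hab, Set.singleton_eq_singleton_iff] at hbd
    exact huv hbd.symm
  rw [hp, hq, Set.eq_of_symmDiff_square hp hq hx hy hbc had]

lemma apply_symmDiff_eq_of_subset (g : GammaComp ES s ≃g GammaComp ET t)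
    {a b c d : Comp ES s} {v : V} (hva : v ∉ a.1.1) (hb : b.1.1 = insert v a.1.1)
    (hc : c.1.1 ⊆ a.1.1) (hd : d.1.1 = insert v c.1.1) :
    (g c).1.1 ∆ (g d).1.1 = (g a).1.1 ∆ (g b).1.1 := by
  refine Comp.induction_subset
    (P := fun c => ∀ d : Comp ES s, d.1.1 = insert v c.1.1 →
      (g c).1.1 ∆ (g d).1.1 = (g a).1.1 ∆ (g b).1.1) ?_ ?_ hc d hd
  · intro d hd
    rw [Comp.ext_set (hd.trans hb.symm)]
  · intro c c' x hxc hc' hc'a ih d hd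
    have hxv : x ≠ v := fun h => hva (hc'a (hc' ▸ h ▸ Set.mem_insert x _))
    have hvc : v ∉ c.1.1 := fun h => hva (hc'a (hc' ▸ Set.mem_insert_of_mem x h))
    have hxd : x ∉ d.1.1 := by
      rw [hd]
      rintro (h | h)
      exacts [hxv h, hxc h]
    have hd'b : insert x d.1.1 ⊆ b.1.1 := by
      rw [hd, hb, Set.insert_comm, ← hc']
      exact Set.insert_subset_insert hc'a
    let d' := Comp.addVertex d x (b.1.2.mono_s8 hd'b)
    have hd' : d'.1.1 = insert v c'.1.1 := by
      show insert x d.1.1 = _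
      rw [hd, hc', Set.insert_comm]
    rw [apply_symmDiff_eq_of_square g hxv (c := c') (d := d')
      (by rw [hd]; exact Set.symmDiff_insert_self hvc)
      (by rw [hd']; exact Set.symmDiff_insert_self fun h => hva (hc'a h))
      (by rw [hc']; exact Set.symmDiff_insert_self hxc)
      (Set.symmDiff_insert_self hxd), ih d' hd']

lemma apply_symmDiff_eq_of_flip (g : GammaComp ES s ≃g GammaComp ET t)
    {a b a' b' : Comp ES s} {v : V} (hva : v ∉ a.1.1) (hab : a.1.1 ∆ b.1.1 = {v})
    (hva' : v ∉ a'.1.1) (hab' : a'.1.1 ∆ b'.1.1 = {v}) :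
    (g a).1.1 ∆ (g b).1.1 = (g a').1.1 ∆ (g b').1.1 := by
  have hb := Set.eq_insert_of_symmDiff_eq_singleton hab hva
  have hb' := Set.eq_insert_of_symmDiff_eq_singleton hab' hva'
  let c := Comp.inter a a'
  let d := Comp.addVertex c v <| b.1.2.mono_s8 <| hb ▸ Set.insert_subset_insert Set.inter_subset_left
  rw [← apply_symmDiff_eq_of_subset g hva hb (c := c) (d := d) Set.inter_subset_left rfl,
    apply_symmDiff_eq_of_subset g hva' hb' Set.inter_subset_right rfl]

def TransportsFlips (g : GammaComp ES s ≃g GammaComp ET t) (f : V → W) : Prop :=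
  ∀ ⦃a b : Comp ES s⦄ ⦃v : V⦄, a.1.1 ∆ b.1.1 = {v} → (g a).1.1 ∆ (g b).1.1 = {f v}

lemma exists_transportsFlips (hsimp : SimpleHG ES) (hlf : LocFin ES) (hs : Indep ES s)
    (g : GammaComp ES s ≃g GammaComp ET t) : ∃ f : V → W, TransportsFlips g f := by
  choose a b hva hab using Comp.exists_flip hsimp hlf hs
  choose f hf using fun v => exists_apply_symmDiff_eq_singleton g (hab v)
  refine ⟨f, fun c d v hcd => ?_⟩
  by_cases hvc : v ∈ c.1.1
  · have hvd : v ∉ d.1.1 := fun hvd => by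
      simpa [hcd] using (Set.mem_symmDiff.not.2 (by tauto) : v ∉ c.1.1 ∆ d.1.1)
    rw [symmDiff_comm] at hcd ⊢
    rw [apply_symmDiff_eq_of_flip g hvd hcd (hva v) (hab v), hf v]
  · rw [apply_symmDiff_eq_of_flip g hvc hcd (hva v) (hab v), hf v]

namespace TransportsFlips

variable {g : GammaComp ES s ≃g GammaComp ET t}

lemma symm {φ : V ≃ W} (h : TransportsFlips g φ) : TransportsFlips g.symm φ.symm := by
  intro a b w hab
  obtain ⟨v, hv⟩ := exists_apply_symmDiff_eq_singleton g.symm hab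
  have hw := h hv
  rw [RelIso.apply_symm_apply, RelIso.apply_symm_apply, hab,
    Set.singleton_eq_singleton_iff] at hw
  rw [hv, hw, φ.symm_apply_apply]

lemma leftInverse (hsimp : SimpleHG ES) (hlf : LocFin ES) (hs : Indep ES s) {f : V → W}
    {f' : W → V} (hf : TransportsFlips g f) (hf' : TransportsFlips g.symm f') :
    Function.LeftInverse f' f := by
  intro v
  obtain ⟨a, b, -, hab⟩ := Comp.exists_flip hsimp hlf hs v
  have h := hf' (hf hab)
  rw [RelIso.symm_apply_apply, RelIso.symm_apply_apply, hab,
    Set.singleton_eq_singleton_iff] at h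
  exact h.symm

variable {f : V → W}

lemma apply_symmDiff_apply_of_subset (hf : TransportsFlips g f) (hinj : f.Injective)
    {a c : Comp ES s} (hc : c.1.1 ⊆ a.1.1) :
    (g c).1.1 ∆ (g a).1.1 = f '' (a.1.1 \ c.1.1) := by
  refine Comp.induction_subset
    (P := fun c => (g c).1.1 ∆ (g a).1.1 = f '' (a.1.1 \ c.1.1)) (by simp) ?_ hc
  intro c c' x hxc hc' hc'a ih
  have hxa : x ∈ a.1.1 := hc'a (hc' ▸ Set.mem_insert x _)
  have hdiff : a.1.1 \ c.1.1 = insert x (a.1.1 \ c'.1.1) := by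
    rw [hc']
    ext y
    by_cases hy : y = x
    · subst hy; simp [hxa, hxc]
    · simp [hy]
  have hfx : f x ∉ f '' (a.1.1 \ c'.1.1) := by
    rw [hinj.mem_set_image, hc']
    exact fun h => h.2 (Set.mem_insert x _)
  calc (g c).1.1 ∆ (g a).1.1 = ((g c).1.1 ∆ (g c').1.1) ∆ ((g c').1.1 ∆ (g a).1.1) := by
        rw [symmDiff_assoc, symmDiff_symmDiff_cancel_left]
    _ = {f x} ∆ (f '' (a.1.1 \ c'.1.1)) := by
        rw [hf (by rw [hc']; exact Set.symmDiff_insert_self hxc), ih]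
    _ = f '' (a.1.1 \ c.1.1) := by
        rw [Set.singleton_symmDiff_of_notMem hfx, hdiff, Set.image_insert_eq]

lemma apply_symmDiff_apply (hf : TransportsFlips g f) (hinj : f.Injective) (a b : Comp ES s) :
    (g a).1.1 ∆ (g b).1.1 = f '' (a.1.1 ∆ b.1.1) := by
  let c := Comp.inter a b
  calc (g a).1.1 ∆ (g b).1.1 = ((g c).1.1 ∆ (g a).1.1) ∆ ((g c).1.1 ∆ (g b).1.1) := by
        rw [symmDiff_comm _ (g a).1.1, symmDiff_assoc, symmDiff_symmDiff_cancel_left]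
    _ = (f '' (a.1.1 \ (a.1.1 ∩ b.1.1))) ∆ (f '' (b.1.1 \ (a.1.1 ∩ b.1.1))) := by
        rw [hf.apply_symmDiff_apply_of_subset hinj Set.inter_subset_left,
          hf.apply_symmDiff_apply_of_subset hinj Set.inter_subset_right]
        rfl
    _ = f '' (a.1.1 ∆ b.1.1) := by
        rw [← Set.image_symmDiff hinj]
        congr 1
        ext y
        simp only [Set.mem_symmDiff, Set.mem_sdiff, Set.mem_inter_iff]
        tauto

lemma apply_symmDiff_image_eq (hf : TransportsFlips g f) (hinj : f.Injective)
    (a b : Comp ES s) : (g a).1.1 ∆ (f '' a.1.1) = (g b).1.1 ∆ (f '' b.1.1) := by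
  have h := hf.apply_symmDiff_apply hinj a b
  rw [Set.image_symmDiff hinj] at h
  rw [← symmDiff_eq_bot, symmDiff_symmDiff_symmDiff_comm, h, symmDiff_self]

lemma exists_edge_image_subset (hf : TransportsFlips g f) (hinj : f.Injective)
    (hsimp : SimpleHG ES) (hlf : LocFin ES) (hs : Indep ES s) {e : Finset V} (he : e ∈ ES) :
    ∃ z : Comp ES s, Disjoint (e : Set V) z.1.1 ∧
      ∃ e' ∈ ET, f '' e ⊆ e' ∧ Disjoint (f '' e) (g z).1.1 := by
  obtain ⟨z, hze, hzind⟩ := Comp.exists_disjoint_of_edge hsimp hlf hs he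
  have hunion : ∀ B ⊆ (e : Set V), z.1.1 ∆ (z.1.1 ∪ B) = B := fun B hB => by
    rw [symmDiff_of_le Set.subset_union_left, Set.union_sdiff_left,
      (hze.mono_left hB).sdiff_eq_left]
  have hdrop : ∀ w ∈ f '' e, Indep ET ((g z).1.1 ∆ (f '' e \ {w})) := by
    rintro _ ⟨u, hu, rfl⟩
    let m := Comp.ofSymmDiffFinite z (z.1.1 ∪ (↑e \ {u})) (hzind u hu)
      (by rw [hunion _ Set.sdiff_subset]; exact e.finite_toSet.sdiff)
    convert (g m).1.2 using 1
    rw [← symmDiff_symmDiff_cancel_left (g z).1.1 (g m).1.1, hf.apply_symmDiff_apply hinj z m]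
    show _ = _ ∆ (f '' (z.1.1 ∆ (z.1.1 ∪ _)))
    rw [hunion _ Set.sdiff_subset, Set.image_sdiff hinj, Set.image_singleton]
  have hall : ¬ Indep ET ((g z).1.1 ∆ (f '' e)) := by
    intro hind
    let q : Comp ET t := Comp.ofSymmDiffFinite (g z) _ hind
      (by rw [symmDiff_symmDiff_cancel_left]; exact e.finite_toSet.image f)
    have hr : z.1.1 ∆ (g.symm q).1.1 = e := by
      apply Set.image_injective.2 hinj
      rw [← hf.apply_symmDiff_apply hinj, RelIso.apply_symm_apply]
      exact symmDiff_symmDiff_cancel_left _ _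
    apply (g.symm q).1.2 e he
    rw [← symmDiff_symmDiff_cancel_left z.1.1 (g.symm q).1.1, hr]
    exact (le_symmDiff_iff_right _ _).2 hze.symm
  obtain ⟨e', he', hfe, he'sub⟩ := exists_edge_subset_of_not_indep hdrop hall
  refine ⟨z, hze, e', he', hfe, Set.disjoint_left.2 fun w hwA hwz => ?_⟩
  rcases he'sub (hfe hwA) with ⟨-, h⟩ | ⟨-, h⟩
  exacts [h hwA, h hwz]

lemma apply_eq_image (hf : TransportsFlips g f) (hbij : f.Bijective) (hsimp : SimpleHG ES)
    (hlf : LocFin ES) (hs : Indep ES s) (hni : ∀ v : V, ∃ e ∈ ES, v ∈ e) (r : Comp ES s) :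
    (g r).1.1 = f '' r.1.1 := by
  rw [← symmDiff_eq_bot, Set.bot_eq_empty, Set.eq_empty_iff_forall_notMem]
  intro w
  obtain ⟨v, rfl⟩ := hbij.2 w
  obtain ⟨e, he, hve⟩ := hni v
  obtain ⟨z, hze, -, -, -, hdisj⟩ := hf.exists_edge_image_subset hbij.1 hsimp hlf hs he
  have hvz : v ∉ z.1.1 := Set.disjoint_left.1 hze hve
  have hfvz : f v ∉ (g z).1.1 := Set.disjoint_left.1 hdisj (Set.mem_image_of_mem f hve)
  rw [hf.apply_symmDiff_image_eq hbij.1 r z, Set.mem_symmDiff, hbij.1.mem_set_image]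
  tauto

lemma exists_edge_eq_image {φ : V ≃ W} (hφ : TransportsFlips g φ) (hSsimp : SimpleHG ES)
    (hTsimp : SimpleHG ET) (hSlf : LocFin ES) (hTlf : LocFin ET) (hs : Indep ES s)
    (ht : Indep ET t) {e : Finset V} (he : e ∈ ES) : ∃ e' ∈ ET, (e' : Set W) = φ '' e := by
  obtain ⟨-, -, e', he', hee', -⟩ := hφ.exists_edge_image_subset φ.injective hSsimp hSlf hs he
  obtain ⟨-, -, e'', he'', he'e'', -⟩ :=
    hφ.symm.exists_edge_image_subset φ.symm.injective hTsimp hTlf ht he'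
  obtain rfl : e = e'' := hSsimp.2 e he e'' he''
    (Finset.coe_subset.1 (((φ.subset_symm_image _ _).2 hee').trans he'e''))
  exact ⟨e', he', subset_antisymm ((φ.symm_image_subset _ _).1 he'e'') hee'⟩

end TransportsFlips

lemma exists_equiv_transportsFlips (hSsimp : SimpleHG ES) (hTsimp : SimpleHG ET)
    (hSlf : LocFin ES) (hTlf : LocFin ET) (hs : Indep ES s) (ht : Indep ET t)
    (g : GammaComp ES s ≃g GammaComp ET t) : ∃ φ : V ≃ W, TransportsFlips g φ := by
  obtain ⟨f, hf⟩ := exists_transportsFlips hSsimp hSlf hs g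
  obtain ⟨f', hf'⟩ := exists_transportsFlips hTsimp hTlf ht g.symm
  refine ⟨⟨f, f', hf.leftInverse hSsimp hSlf hs hf', ?_⟩, hf⟩
  exact hf'.leftInverse hTsimp hTlf ht (g.symm_symm ▸ hf)

end Transport

theorem stmt8_general {VS VT : Type*} (ES : Set (Finset VS)) (ET : Set (Finset VT))
    (hSsimp : SimpleHG ES) (hTsimp : SimpleHG ET) (hSlf : LocFin ES) (hTlf : LocFin ET)
    (hSni : ∀ v : VS, ∃ e ∈ ES, v ∈ e)
    (s : Set VS) (t : Set VT) (hs : Indep ES s) (ht : Indep ET t)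
    (g : GammaComp ES s ≃g GammaComp ET t) :
    ∃ f : VS → VT, IsIsoHG ES ET f ∧ ∀ r : Comp ES s, (g r).1.1 = f '' r.1.1 := by
  obtain ⟨φ, hφ⟩ := exists_equiv_transportsFlips hSsimp hTsimp hSlf hTlf hs ht g
  refine ⟨φ, ⟨φ.bijective, fun e => ⟨hφ.exists_edge_eq_image hSsimp hTsimp hSlf hTlf hs ht, ?_⟩⟩,
    hφ.apply_eq_image φ.bijective hSsimp hSlf hs hSni⟩
  rintro ⟨e', he', hee'⟩
  obtain ⟨e'', he'', he''e'⟩ := hφ.symm.exists_edge_eq_image hTsimp hSsimp hTlf hSlf ht hs he'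
  obtain rfl : e'' = e := Finset.coe_injective (by rw [he''e', hee', φ.symm_image_image])
  exact he''

theorem stmt8 {VS VT : Type*} (ES : Set (Finset VS)) (ET : Set (Finset VT))
    (hSsimp : SimpleHG ES) (hTsimp : SimpleHG ET) (hSlf : LocFin ES) (hTlf : LocFin ET)
    (hSni : ∀ v : VS, ∃ e ∈ ES, v ∈ e) (hTni : ∀ v : VT, ∃ e ∈ ET, v ∈ e)
    (s : Set VS) (t : Set VT) (hs : Indep ES s) (ht : Indep ET t)
    (g : GammaComp ES s ≃g GammaComp ET t) :
    ∃ f : VS → VT, IsIsoHG ES ET f ∧ ∀ r : Comp ES s, (g r).1.1 = f '' r.1.1 :=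
  stmt8_general ES ET hSsimp hTsimp hSlf hTlf hSni s t hs ht g
end
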